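/- For two minhash signatures of sets A and B under a uniformly random permutation h of the universe, the probability that min h(A) = min h(B) equals the Jaccard similarity |A ∩ B| / |A ∪ B|. -/
import Mathlib


/-- MinHash property: for nonempty finite subsets `A`, `B` of a finite universe
`Fin n`, the fraction of permutations `h` under which the minimum hash value of
`A` equals that of `B` is exactly the Jaccard similarity `|A ∩ B| / |A ∪ B|`. -/
theorem minhash_jaccard (n : ℕ) (A B : Finset (Fin n))
    (hA : A.Nonempty) (hB : B.Nonempty) :
    ((Finset.univ.filter (fun h : Equiv.Perm (Fin n) =>
        (A.image h).min' (hA.image h) = (B.image h).min' (hB.image h))).card : ℝ) /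
      ((Finset.univ : Finset (Equiv.Perm (Fin n))).card : ℝ) =
    ((A ∩ B).card : ℝ) / ((A ∪ B).card : ℝ) := by
  classical
  have hUne : (A ∪ B).Nonempty := hA.mono Finset.subset_union_left
  set am : Equiv.Perm (Fin n) → Fin n :=
    fun h => h.symm (((A ∪ B).image h).min' (hUne.image h)) with ham
  -- key: for a nonempty subset s of A ∪ B, min' of s.image h equals min' of (A∪B).image h
  -- iff the argmin of A ∪ B lies in s.
  have key : ∀ (h : Equiv.Perm (Fin n)) (s : Finset (Fin n)) (hs : s.Nonempty),
      s ⊆ A ∪ B →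
      ((s.image h).min' (hs.image h) = ((A ∪ B).image h).min' (hUne.image h)
        ↔ am h ∈ s) := by
    intro h s hs hsub
    constructor
    · intro he
      have hm := Finset.min'_mem (s.image h) (hs.image h)
      rw [he] at hm
      obtain ⟨a, ha, hae⟩ := Finset.mem_image.mp hm
      have : am h = a := by simp [ham, ← hae]
      rwa [this]
    · intro hm
      have h1 : ((A ∪ B).image h).min' (hUne.image h) ∈ s.image h := by
        have := Finset.mem_image_of_mem h hm
        simpa [ham] using this
      exact le_antisymm (Finset.min'_le _ _ h1)
        (Finset.min'_subset _ (Finset.image_subset_image hsub))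
  -- the filter condition is equivalent to `am h ∈ A ∩ B`
  have cond_iff : ∀ h : Equiv.Perm (Fin n),
      ((A.image h).min' (hA.image h) = (B.image h).min' (hB.image h)) ↔ am h ∈ A ∩ B := by
    intro h
    rw [Finset.mem_inter, ← key h A hA Finset.subset_union_left,
      ← key h B hB Finset.subset_union_right]
    have hv : ((A.image h).min' (hA.image h) = ((A ∪ B).image h).min' (hUne.image h)) ∨
        ((B.image h).min' (hB.image h) = ((A ∪ B).image h).min' (hUne.image h)) := by
      have hmem := Finset.min'_mem ((A ∪ B).image h) (hUne.image h)
      have hsub : (A ∪ B).image h ⊆ A.image h ∪ B.image h := by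
        rw [← Finset.image_union]
      rcases Finset.mem_union.mp (hsub hmem) with hm | hm
      · exact Or.inl (le_antisymm (Finset.min'_le _ _ hm)
          (Finset.min'_subset _ (Finset.image_subset_image Finset.subset_union_left)))
      · exact Or.inr (le_antisymm (Finset.min'_le _ _ hm)
          (Finset.min'_subset _ (Finset.image_subset_image Finset.subset_union_right)))
    constructor
    · intro he
      rcases hv with h1 | h1
      · exact ⟨h1, he ▸ h1⟩
      · exact ⟨he ▸ h1, h1⟩
    · rintro ⟨h1, h2⟩
      rw [h1, h2]
  -- fibers of `am` over elements of A ∪ B all have the same cardinality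
  have fiber_eq : ∀ x ∈ A ∪ B, ∀ y ∈ A ∪ B,
      (Finset.univ.filter (fun h : Equiv.Perm (Fin n) => am h = x)).card =
      (Finset.univ.filter (fun h : Equiv.Perm (Fin n) => am h = y)).card := by
    intro x hx y hy
    have hswap : ∀ h : Equiv.Perm (Fin n),
        am (h * Equiv.swap x y) = Equiv.swap x y (am h) := by
      intro h
      have himg : (A ∪ B).image (⇑(h * Equiv.swap x y)) = (A ∪ B).image h := by
        have h1 : (A ∪ B).image (Equiv.swap x y) = A ∪ B := by
          apply Finset.eq_of_subset_of_card_le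
          · intro a ha
            obtain ⟨b, hb, rfl⟩ := Finset.mem_image.mp ha
            rcases eq_or_ne b x with rfl | hbx
            · simpa [Equiv.swap_apply_left] using hy
            rcases eq_or_ne b y with rfl | hby
            · simpa [Equiv.swap_apply_right] using hx
            · simpa [Equiv.swap_apply_of_ne_of_ne hbx hby] using hb
          · rw [Finset.card_image_of_injective _ (Equiv.injective _)]
        calc (A ∪ B).image (⇑(h * Equiv.swap x y))
            = ((A ∪ B).image (Equiv.swap x y)).image h := by
              rw [Finset.image_image]; rfl
          _ = (A ∪ B).image h := by rw [h1]
      have hmin : (((A ∪ B).image (⇑(h * Equiv.swap x y))).min'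
            (hUne.image _)) = ((A ∪ B).image h).min' (hUne.image h) := by
        congr 1
      simp only [ham, hmin]
      rw [Equiv.symm_apply_eq]
      simp [Equiv.Perm.mul_apply, Equiv.swap_apply_self]
    refine Finset.card_bij' (fun h _ => h * Equiv.swap x y) (fun h _ => h * Equiv.swap x y)
      ?_ ?_ ?_ ?_
    · intro h hh
      simp only [Finset.mem_filter, Finset.mem_univ, true_and] at hh ⊢
      rw [hswap, hh, Equiv.swap_apply_left]
    · intro h hh
      simp only [Finset.mem_filter, Finset.mem_univ, true_and] at hh ⊢
      rw [hswap, hh, Equiv.swap_apply_right]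
    · intro h _
      simp only [mul_assoc, Equiv.swap_mul_self, mul_one]
    · intro h _
      simp only [mul_assoc, Equiv.swap_mul_self, mul_one]
  obtain ⟨x₀, hx₀⟩ := id hUne
  set c : ℕ := (Finset.univ.filter (fun h : Equiv.Perm (Fin n) => am h = x₀)).card with hc
  -- numerator
  have sum1 : (Finset.univ.filter (fun h : Equiv.Perm (Fin n) =>
        (A.image h).min' (hA.image h) = (B.image h).min' (hB.image h))).card =
      (A ∩ B).card * c := by
    rw [Finset.card_eq_sum_card_fiberwise (f := am) (t := A ∩ B)
      (fun h hh => (cond_iff h).mp (Finset.mem_filter.mp hh).2)]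
    rw [Finset.sum_congr rfl (fun x hx => ?_), Finset.sum_const, smul_eq_mul]
    have h1 : Finset.filter (fun a => am a = x)
        (Finset.univ.filter (fun h : Equiv.Perm (Fin n) =>
          (A.image h).min' (hA.image h) = (B.image h).min' (hB.image h))) =
        Finset.univ.filter (fun h : Equiv.Perm (Fin n) => am h = x) := by
      ext h
      simp only [Finset.mem_filter, Finset.mem_univ, true_and]
      constructor
      · rintro ⟨_, h2⟩; exact h2
      · intro h2
        exact ⟨(cond_iff h).mpr (h2 ▸ hx), h2⟩
    rw [h1]
    exact fiber_eq x (Finset.mem_union_left _ (Finset.mem_inter.mp hx).1) x₀ hx₀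
  -- denominator
  have sum2 : (Finset.univ : Finset (Equiv.Perm (Fin n))).card = (A ∪ B).card * c := by
    rw [Finset.card_eq_sum_card_fiberwise (f := am) (t := A ∪ B)
      (fun h _ => by
        simp only [ham]
        have := Finset.min'_mem ((A ∪ B).image h) (hUne.image h)
        obtain ⟨a, ha, hae⟩ := Finset.mem_image.mp this
        have : h.symm (((A ∪ B).image h).min' (hUne.image h)) = a := by simp [← hae]
        rwa [this])]
    rw [Finset.sum_congr rfl (fun x hx => fiber_eq x hx x₀ hx₀), Finset.sum_const, smul_eq_mul]
  -- putting it together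
  rw [sum1, sum2]
  have hcpos : 0 < c := by
    rcases Nat.eq_zero_or_pos c with hcz | hcp
    · exfalso
      have h0 : (Finset.univ : Finset (Equiv.Perm (Fin n))).card = 0 := by
        rw [sum2, hcz, mul_zero]
      rw [Finset.card_univ] at h0
      exact Fintype.card_pos.ne' h0
    · exact hcp
  push_cast
  rw [mul_div_mul_right _ _ (by exact_mod_cast hcpos.ne')]
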